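/- Consider the 7-dimensional real Lie algebra so12w2uz with basis J_1,J_2,J_3,W_1,W_2,Z,U and brackets: [J_x,J_y]=f^z_{xy}J_z (the sl(2,R) structure constants), [J_x,W_α]=(λ_x)_α^β W_β with λ_1=diag(1/2,-1/2), λ_2=((0,1/2),(1/2,0)), λ_3=((0,1/2),(-1/2,0)), [J_x,U]=[J_x,Z]=0, [W_1,W_2]=Z, [U,W_α]=q W_α, [U,Z]=2qZ, [Z,W_α]=0, for a real parameter q. This bracket satisfies the Jacobi identity, and its Ricci matrix equals diag(-1, -1, 1/4, -1/4-2q², -1/4-2q², 1/4-4q², -3q²); in particular it has indefinite signature (both a positive and a negative eigenvalue) for every real q. -/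
import Mathlib


open Matrix

open scoped BigOperators

/-- The Ricci matrix built from structure constants `τ^A_{IB} = τ A I B`:
`Ric^I_J = -(1/4)Tr(τ_I τ_J) - (1/4)Tr(τ_I τ_Jᵀ) + (1/8)Σ_K (τ_K τ_Kᵀ)^{IJ}
 - (1/4)Σ_K τ^I_{KJ} Tr(τ_K) + (1/4)Σ_K τ^K_{IJ} Tr(τ_K) - (1/4)Σ_K τ^J_{KI} Tr(τ_K)`. -/
noncomputable def RicciMatrix {n : ℕ} (τ : Fin n → Fin n → Fin n → ℝ) :
    Matrix (Fin n) (Fin n) ℝ :=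
  let t : Fin n → Matrix (Fin n) (Fin n) ℝ := fun I => Matrix.of fun A B => τ A I B
  Matrix.of fun I J =>
    -(1/4) * (t I * t J).trace - (1/4) * (t I * (t J)ᵀ).trace
      + (1/8) * ∑ K, (t K * (t K)ᵀ) I J
      - (1/4) * ∑ K, τ I K J * (t K).trace
      + (1/4) * ∑ K, τ K I J * (t K).trace
      - (1/4) * ∑ K, τ J K I * (t K).trace

/-- The Jacobi identity for structure constants `τ^K_{IJ} = τ K I J`. -/
def JacobiId {n : ℕ} (τ : Fin n → Fin n → Fin n → ℝ) : Prop :=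
  ∀ I J K M : Fin n,
    ∑ L, (τ M L K * τ L I J + τ M L I * τ L J K + τ M L J * τ L K I) = 0

/-- The matrices `λ₁ = diag(1/2,-1/2)`, `λ₂ = ((0,1/2),(1/2,0))`, `λ₃ = ((0,1/2),(-1/2,0))`. -/
noncomputable def lam : Fin 3 → Matrix (Fin 2) (Fin 2) ℝ :=
  ![!![1/2, 0; 0, -1/2], !![0, 1/2; 1/2, 0], !![0, 1/2; -1/2, 0]]

/-- Extension of the `sl(2,ℝ)` structure constants `f^z_{xy} = f x y z` to natural
number indices. -/
noncomputable def fN (f : Fin 3 → Fin 3 → Fin 3 → ℝ) (x y z : ℕ) : ℝ :=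
  if hx : x < 3 then if hy : y < 3 then if hz : z < 3 then f ⟨x, hx⟩ ⟨y, hy⟩ ⟨z, hz⟩
    else 0 else 0 else 0

/-- Extension of the entries of the `λ` matrices to natural number indices. -/
noncomputable def lamN (x a b : ℕ) : ℝ :=
  if hx : x < 3 then if ha : a < 2 then if hb : b < 2 then lam ⟨x, hx⟩ ⟨a, ha⟩ ⟨b, hb⟩
    else 0 else 0 else 0

/-- Structure constants `τ^A_{IB}` of the algebra `so12w2uz` in the ordered basis
`(J₁,J₂,J₃,W₁,W₂,Z,U)`: `[J_x,J_y]=f^z_{xy}J_z`, `[J_x,W_α]=(λ_x)_α{}^β W_β`,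
`[J_x,U]=[J_x,Z]=0`, `[W₁,W₂]=Z`, `[U,W_α]=q W_α`, `[U,Z]=2qZ`, `[Z,W_α]=0`. -/
noncomputable def tauSO12W2UZ (f : Fin 3 → Fin 3 → Fin 3 → ℝ) (q : ℝ) :
    Fin 7 → Fin 7 → Fin 7 → ℝ := fun A I B =>
  if A.1 < 3 ∧ I.1 < 3 ∧ B.1 < 3 then fN f I.1 B.1 A.1
  else if I.1 < 3 ∧ 3 ≤ B.1 ∧ B.1 < 5 ∧ 3 ≤ A.1 ∧ A.1 < 5 then
    lamN I.1 (A.1 - 3) (B.1 - 3)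
  else if 3 ≤ I.1 ∧ I.1 < 5 ∧ B.1 < 3 ∧ 3 ≤ A.1 ∧ A.1 < 5 then
    -lamN B.1 (A.1 - 3) (I.1 - 3)
  else if A.1 = 5 ∧ I.1 = 3 ∧ B.1 = 4 then 1
  else if A.1 = 5 ∧ I.1 = 4 ∧ B.1 = 3 then -1
  else if I.1 = 6 ∧ 3 ≤ B.1 ∧ B.1 < 5 ∧ A = B then q
  else if 3 ≤ I.1 ∧ I.1 < 5 ∧ B.1 = 6 ∧ A = I then -q
  else if I.1 = 6 ∧ B.1 = 5 ∧ A.1 = 5 then 2*q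
  else if I.1 = 5 ∧ B.1 = 6 ∧ A.1 = 5 then -(2*q)
  else 0


set_option maxRecDepth 100000

section EvalLemmas
variable {α : Type*} (a b c d e g h : α)
lemma cv2_0 : ![a,b] (0 : Fin 2) = a := rfl
lemma cv2_1 : ![a,b] (1 : Fin 2) = b := rfl
lemma cv3_0 : ![a,b,c] (0 : Fin 3) = a := rfl
lemma cv3_1 : ![a,b,c] (1 : Fin 3) = b := rfl
lemma cv3_2 : ![a,b,c] (2 : Fin 3) = c := rfl
lemma cv7_0 : ![a,b,c,d,e,g,h] (0 : Fin 7) = a := rfl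
lemma cv7_1 : ![a,b,c,d,e,g,h] (1 : Fin 7) = b := rfl
lemma cv7_2 : ![a,b,c,d,e,g,h] (2 : Fin 7) = c := rfl
lemma cv7_3 : ![a,b,c,d,e,g,h] (3 : Fin 7) = d := rfl
lemma cv7_4 : ![a,b,c,d,e,g,h] (4 : Fin 7) = e := rfl
lemma cv7_5 : ![a,b,c,d,e,g,h] (5 : Fin 7) = g := rfl
lemma cv7_6 : ![a,b,c,d,e,g,h] (6 : Fin 7) = h := rfl
lemma mk3_2 (h : 2 < 3) : (⟨2, h⟩ : Fin 3) = 2 := rfl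
lemma mk7_2 (h : 2 < 7) : (⟨2, h⟩ : Fin 7) = 2 := rfl
lemma mk7_3 (h : 3 < 7) : (⟨3, h⟩ : Fin 7) = 3 := rfl
lemma mk7_4 (h : 4 < 7) : (⟨4, h⟩ : Fin 7) = 4 := rfl
lemma mk7_5 (h : 5 < 7) : (⟨5, h⟩ : Fin 7) = 5 := rfl
lemma mk7_6 (h : 6 < 7) : (⟨6, h⟩ : Fin 7) = 6 := rfl
end EvalLemmas

lemma v7_0 : ((0:Fin 7):ℕ) = 0 := rfl
lemma v7_1 : ((1:Fin 7):ℕ) = 1 := rfl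
lemma v7_2 : ((2:Fin 7):ℕ) = 2 := rfl
lemma v7_3 : ((3:Fin 7):ℕ) = 3 := rfl
lemma v7_4 : ((4:Fin 7):ℕ) = 4 := rfl
lemma v7_5 : ((5:Fin 7):ℕ) = 5 := rfl
lemma v7_6 : ((6:Fin 7):ℕ) = 6 := rfl

/-- Explicit values of the `sl(2,ℝ)` structure constants. -/
noncomputable def Flit : Fin 3 → Fin 3 → Fin 3 → ℝ :=
  ![![![0,0,0],![0,0,1],![0,1,0]],
    ![![0,0,-1],![0,0,0],![-1,0,0]],
    ![![0,-1,0],![1,0,0],![0,0,0]]]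

theorem fval (f : Fin 3 → Fin 3 → Fin 3 → ℝ)
    (hf : ∀ x y : Fin 3, lam x * lam y - lam y * lam x = ∑ z, f x y z • lam z) :
    ∀ x y z, f x y z = Flit x y z := by
  have e : ∀ x y : Fin 3, ∀ a b : Fin 2,
      (lam x * lam y) a b - (lam y * lam x) a b =
        f x y 0 * lam 0 a b + f x y 1 * lam 1 a b + f x y 2 * lam 2 a b := by
    intro x y a b
    have h := congrFun (congrFun (hf x y) a) b
    simpa [Fin.sum_univ_three, Matrix.sub_apply, Matrix.smul_apply, smul_eq_mul] using h
  intro x y z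
  have h00 := e x y 0 0
  have h01 := e x y 0 1
  have h10 := e x y 1 0
  fin_cases x <;> fin_cases y <;> fin_cases z <;>
    · simp only [Fin.mk_zero, Fin.mk_one, mk3_2, lam, Flit, Matrix.mul_apply,
        Matrix.of_apply, Fin.sum_univ_two, cv2_0, cv2_1, cv3_0, cv3_1, cv3_2] at h00 h01 h10 ⊢
      norm_num at h00 h01 h10 ⊢ <;> linarith

noncomputable def Tlit (q : ℝ) : Fin 7 → Fin 7 → Fin 7 → ℝ :=
 fun A => ![
  ![![0, 0, 0, 0, 0, 0, 0],
    ![0, 0, -1, 0, 0, 0, 0],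
    ![0, 1, 0, 0, 0, 0, 0],
    ![0, 0, 0, 0, 0, 0, 0],
    ![0, 0, 0, 0, 0, 0, 0],
    ![0, 0, 0, 0, 0, 0, 0],
    ![0, 0, 0, 0, 0, 0, 0]],
  ![![0, 0, 1, 0, 0, 0, 0],
    ![0, 0, 0, 0, 0, 0, 0],
    ![-1, 0, 0, 0, 0, 0, 0],
    ![0, 0, 0, 0, 0, 0, 0],
    ![0, 0, 0, 0, 0, 0, 0],
    ![0, 0, 0, 0, 0, 0, 0],
    ![0, 0, 0, 0, 0, 0, 0]],
  ![![0, 1, 0, 0, 0, 0, 0],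
    ![-1, 0, 0, 0, 0, 0, 0],
    ![0, 0, 0, 0, 0, 0, 0],
    ![0, 0, 0, 0, 0, 0, 0],
    ![0, 0, 0, 0, 0, 0, 0],
    ![0, 0, 0, 0, 0, 0, 0],
    ![0, 0, 0, 0, 0, 0, 0]],
  ![![0, 0, 0, 1/2, 0, 0, 0],
    ![0, 0, 0, 0, 1/2, 0, 0],
    ![0, 0, 0, 0, 1/2, 0, 0],
    ![-(1/2), -(0), -(0), 0, 0, 0, -q],
    ![-(0), -(1/2), -(1/2), 0, 0, 0, 0],
    ![0, 0, 0, 0, 0, 0, 0],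
    ![0, 0, 0, q, 0, 0, 0]],
  ![![0, 0, 0, 0, -1/2, 0, 0],
    ![0, 0, 0, 1/2, 0, 0, 0],
    ![0, 0, 0, -1/2, 0, 0, 0],
    ![-(0), -(1/2), -(-1/2), 0, 0, 0, 0],
    ![-(-1/2), -(0), -(0), 0, 0, 0, -q],
    ![0, 0, 0, 0, 0, 0, 0],
    ![0, 0, 0, 0, q, 0, 0]],
  ![![0, 0, 0, 0, 0, 0, 0],
    ![0, 0, 0, 0, 0, 0, 0],
    ![0, 0, 0, 0, 0, 0, 0],
    ![0, 0, 0, 0, 1, 0, 0],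
    ![0, 0, 0, -1, 0, 0, 0],
    ![0, 0, 0, 0, 0, 0, -(2*q)],
    ![0, 0, 0, 0, 0, 2*q, 0]],
  ![![0, 0, 0, 0, 0, 0, 0],
    ![0, 0, 0, 0, 0, 0, 0],
    ![0, 0, 0, 0, 0, 0, 0],
    ![0, 0, 0, 0, 0, 0, 0],
    ![0, 0, 0, 0, 0, 0, 0],
    ![0, 0, 0, 0, 0, 0, 0],
    ![0, 0, 0, 0, 0, 0, 0]]] A


lemma tv_0_0_0 (q : ℝ) : Tlit q 0 0 0 = 0 := rfl
lemma tv_0_0_1 (q : ℝ) : Tlit q 0 0 1 = 0 := rfl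
lemma tv_0_0_2 (q : ℝ) : Tlit q 0 0 2 = 0 := rfl
lemma tv_0_0_3 (q : ℝ) : Tlit q 0 0 3 = 0 := rfl
lemma tv_0_0_4 (q : ℝ) : Tlit q 0 0 4 = 0 := rfl
lemma tv_0_0_5 (q : ℝ) : Tlit q 0 0 5 = 0 := rfl
lemma tv_0_0_6 (q : ℝ) : Tlit q 0 0 6 = 0 := rfl
lemma tv_0_1_0 (q : ℝ) : Tlit q 0 1 0 = 0 := rfl
lemma tv_0_1_1 (q : ℝ) : Tlit q 0 1 1 = 0 := rfl
lemma tv_0_1_2 (q : ℝ) : Tlit q 0 1 2 = -1 := rfl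
lemma tv_0_1_3 (q : ℝ) : Tlit q 0 1 3 = 0 := rfl
lemma tv_0_1_4 (q : ℝ) : Tlit q 0 1 4 = 0 := rfl
lemma tv_0_1_5 (q : ℝ) : Tlit q 0 1 5 = 0 := rfl
lemma tv_0_1_6 (q : ℝ) : Tlit q 0 1 6 = 0 := rfl
lemma tv_0_2_0 (q : ℝ) : Tlit q 0 2 0 = 0 := rfl
lemma tv_0_2_1 (q : ℝ) : Tlit q 0 2 1 = 1 := rfl
lemma tv_0_2_2 (q : ℝ) : Tlit q 0 2 2 = 0 := rfl
lemma tv_0_2_3 (q : ℝ) : Tlit q 0 2 3 = 0 := rfl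
lemma tv_0_2_4 (q : ℝ) : Tlit q 0 2 4 = 0 := rfl
lemma tv_0_2_5 (q : ℝ) : Tlit q 0 2 5 = 0 := rfl
lemma tv_0_2_6 (q : ℝ) : Tlit q 0 2 6 = 0 := rfl
lemma tv_0_3_0 (q : ℝ) : Tlit q 0 3 0 = 0 := rfl
lemma tv_0_3_1 (q : ℝ) : Tlit q 0 3 1 = 0 := rfl
lemma tv_0_3_2 (q : ℝ) : Tlit q 0 3 2 = 0 := rfl
lemma tv_0_3_3 (q : ℝ) : Tlit q 0 3 3 = 0 := rfl
lemma tv_0_3_4 (q : ℝ) : Tlit q 0 3 4 = 0 := rfl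
lemma tv_0_3_5 (q : ℝ) : Tlit q 0 3 5 = 0 := rfl
lemma tv_0_3_6 (q : ℝ) : Tlit q 0 3 6 = 0 := rfl
lemma tv_0_4_0 (q : ℝ) : Tlit q 0 4 0 = 0 := rfl
lemma tv_0_4_1 (q : ℝ) : Tlit q 0 4 1 = 0 := rfl
lemma tv_0_4_2 (q : ℝ) : Tlit q 0 4 2 = 0 := rfl
lemma tv_0_4_3 (q : ℝ) : Tlit q 0 4 3 = 0 := rfl
lemma tv_0_4_4 (q : ℝ) : Tlit q 0 4 4 = 0 := rfl
lemma tv_0_4_5 (q : ℝ) : Tlit q 0 4 5 = 0 := rfl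
lemma tv_0_4_6 (q : ℝ) : Tlit q 0 4 6 = 0 := rfl
lemma tv_0_5_0 (q : ℝ) : Tlit q 0 5 0 = 0 := rfl
lemma tv_0_5_1 (q : ℝ) : Tlit q 0 5 1 = 0 := rfl
lemma tv_0_5_2 (q : ℝ) : Tlit q 0 5 2 = 0 := rfl
lemma tv_0_5_3 (q : ℝ) : Tlit q 0 5 3 = 0 := rfl
lemma tv_0_5_4 (q : ℝ) : Tlit q 0 5 4 = 0 := rfl
lemma tv_0_5_5 (q : ℝ) : Tlit q 0 5 5 = 0 := rfl
lemma tv_0_5_6 (q : ℝ) : Tlit q 0 5 6 = 0 := rfl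
lemma tv_0_6_0 (q : ℝ) : Tlit q 0 6 0 = 0 := rfl
lemma tv_0_6_1 (q : ℝ) : Tlit q 0 6 1 = 0 := rfl
lemma tv_0_6_2 (q : ℝ) : Tlit q 0 6 2 = 0 := rfl
lemma tv_0_6_3 (q : ℝ) : Tlit q 0 6 3 = 0 := rfl
lemma tv_0_6_4 (q : ℝ) : Tlit q 0 6 4 = 0 := rfl
lemma tv_0_6_5 (q : ℝ) : Tlit q 0 6 5 = 0 := rfl
lemma tv_0_6_6 (q : ℝ) : Tlit q 0 6 6 = 0 := rfl
lemma tv_1_0_0 (q : ℝ) : Tlit q 1 0 0 = 0 := rfl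
lemma tv_1_0_1 (q : ℝ) : Tlit q 1 0 1 = 0 := rfl
lemma tv_1_0_2 (q : ℝ) : Tlit q 1 0 2 = 1 := rfl
lemma tv_1_0_3 (q : ℝ) : Tlit q 1 0 3 = 0 := rfl
lemma tv_1_0_4 (q : ℝ) : Tlit q 1 0 4 = 0 := rfl
lemma tv_1_0_5 (q : ℝ) : Tlit q 1 0 5 = 0 := rfl
lemma tv_1_0_6 (q : ℝ) : Tlit q 1 0 6 = 0 := rfl
lemma tv_1_1_0 (q : ℝ) : Tlit q 1 1 0 = 0 := rfl
lemma tv_1_1_1 (q : ℝ) : Tlit q 1 1 1 = 0 := rfl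
lemma tv_1_1_2 (q : ℝ) : Tlit q 1 1 2 = 0 := rfl
lemma tv_1_1_3 (q : ℝ) : Tlit q 1 1 3 = 0 := rfl
lemma tv_1_1_4 (q : ℝ) : Tlit q 1 1 4 = 0 := rfl
lemma tv_1_1_5 (q : ℝ) : Tlit q 1 1 5 = 0 := rfl
lemma tv_1_1_6 (q : ℝ) : Tlit q 1 1 6 = 0 := rfl
lemma tv_1_2_0 (q : ℝ) : Tlit q 1 2 0 = -1 := rfl
lemma tv_1_2_1 (q : ℝ) : Tlit q 1 2 1 = 0 := rfl
lemma tv_1_2_2 (q : ℝ) : Tlit q 1 2 2 = 0 := rfl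
lemma tv_1_2_3 (q : ℝ) : Tlit q 1 2 3 = 0 := rfl
lemma tv_1_2_4 (q : ℝ) : Tlit q 1 2 4 = 0 := rfl
lemma tv_1_2_5 (q : ℝ) : Tlit q 1 2 5 = 0 := rfl
lemma tv_1_2_6 (q : ℝ) : Tlit q 1 2 6 = 0 := rfl
lemma tv_1_3_0 (q : ℝ) : Tlit q 1 3 0 = 0 := rfl
lemma tv_1_3_1 (q : ℝ) : Tlit q 1 3 1 = 0 := rfl
lemma tv_1_3_2 (q : ℝ) : Tlit q 1 3 2 = 0 := rfl
lemma tv_1_3_3 (q : ℝ) : Tlit q 1 3 3 = 0 := rfl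
lemma tv_1_3_4 (q : ℝ) : Tlit q 1 3 4 = 0 := rfl
lemma tv_1_3_5 (q : ℝ) : Tlit q 1 3 5 = 0 := rfl
lemma tv_1_3_6 (q : ℝ) : Tlit q 1 3 6 = 0 := rfl
lemma tv_1_4_0 (q : ℝ) : Tlit q 1 4 0 = 0 := rfl
lemma tv_1_4_1 (q : ℝ) : Tlit q 1 4 1 = 0 := rfl
lemma tv_1_4_2 (q : ℝ) : Tlit q 1 4 2 = 0 := rfl
lemma tv_1_4_3 (q : ℝ) : Tlit q 1 4 3 = 0 := rfl
lemma tv_1_4_4 (q : ℝ) : Tlit q 1 4 4 = 0 := rfl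
lemma tv_1_4_5 (q : ℝ) : Tlit q 1 4 5 = 0 := rfl
lemma tv_1_4_6 (q : ℝ) : Tlit q 1 4 6 = 0 := rfl
lemma tv_1_5_0 (q : ℝ) : Tlit q 1 5 0 = 0 := rfl
lemma tv_1_5_1 (q : ℝ) : Tlit q 1 5 1 = 0 := rfl
lemma tv_1_5_2 (q : ℝ) : Tlit q 1 5 2 = 0 := rfl
lemma tv_1_5_3 (q : ℝ) : Tlit q 1 5 3 = 0 := rfl
lemma tv_1_5_4 (q : ℝ) : Tlit q 1 5 4 = 0 := rfl
lemma tv_1_5_5 (q : ℝ) : Tlit q 1 5 5 = 0 := rfl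
lemma tv_1_5_6 (q : ℝ) : Tlit q 1 5 6 = 0 := rfl
lemma tv_1_6_0 (q : ℝ) : Tlit q 1 6 0 = 0 := rfl
lemma tv_1_6_1 (q : ℝ) : Tlit q 1 6 1 = 0 := rfl
lemma tv_1_6_2 (q : ℝ) : Tlit q 1 6 2 = 0 := rfl
lemma tv_1_6_3 (q : ℝ) : Tlit q 1 6 3 = 0 := rfl
lemma tv_1_6_4 (q : ℝ) : Tlit q 1 6 4 = 0 := rfl
lemma tv_1_6_5 (q : ℝ) : Tlit q 1 6 5 = 0 := rfl
lemma tv_1_6_6 (q : ℝ) : Tlit q 1 6 6 = 0 := rfl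
lemma tv_2_0_0 (q : ℝ) : Tlit q 2 0 0 = 0 := rfl
lemma tv_2_0_1 (q : ℝ) : Tlit q 2 0 1 = 1 := rfl
lemma tv_2_0_2 (q : ℝ) : Tlit q 2 0 2 = 0 := rfl
lemma tv_2_0_3 (q : ℝ) : Tlit q 2 0 3 = 0 := rfl
lemma tv_2_0_4 (q : ℝ) : Tlit q 2 0 4 = 0 := rfl
lemma tv_2_0_5 (q : ℝ) : Tlit q 2 0 5 = 0 := rfl
lemma tv_2_0_6 (q : ℝ) : Tlit q 2 0 6 = 0 := rfl
lemma tv_2_1_0 (q : ℝ) : Tlit q 2 1 0 = -1 := rfl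
lemma tv_2_1_1 (q : ℝ) : Tlit q 2 1 1 = 0 := rfl
lemma tv_2_1_2 (q : ℝ) : Tlit q 2 1 2 = 0 := rfl
lemma tv_2_1_3 (q : ℝ) : Tlit q 2 1 3 = 0 := rfl
lemma tv_2_1_4 (q : ℝ) : Tlit q 2 1 4 = 0 := rfl
lemma tv_2_1_5 (q : ℝ) : Tlit q 2 1 5 = 0 := rfl
lemma tv_2_1_6 (q : ℝ) : Tlit q 2 1 6 = 0 := rfl
lemma tv_2_2_0 (q : ℝ) : Tlit q 2 2 0 = 0 := rfl
lemma tv_2_2_1 (q : ℝ) : Tlit q 2 2 1 = 0 := rfl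
lemma tv_2_2_2 (q : ℝ) : Tlit q 2 2 2 = 0 := rfl
lemma tv_2_2_3 (q : ℝ) : Tlit q 2 2 3 = 0 := rfl
lemma tv_2_2_4 (q : ℝ) : Tlit q 2 2 4 = 0 := rfl
lemma tv_2_2_5 (q : ℝ) : Tlit q 2 2 5 = 0 := rfl
lemma tv_2_2_6 (q : ℝ) : Tlit q 2 2 6 = 0 := rfl
lemma tv_2_3_0 (q : ℝ) : Tlit q 2 3 0 = 0 := rfl
lemma tv_2_3_1 (q : ℝ) : Tlit q 2 3 1 = 0 := rfl
lemma tv_2_3_2 (q : ℝ) : Tlit q 2 3 2 = 0 := rfl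
lemma tv_2_3_3 (q : ℝ) : Tlit q 2 3 3 = 0 := rfl
lemma tv_2_3_4 (q : ℝ) : Tlit q 2 3 4 = 0 := rfl
lemma tv_2_3_5 (q : ℝ) : Tlit q 2 3 5 = 0 := rfl
lemma tv_2_3_6 (q : ℝ) : Tlit q 2 3 6 = 0 := rfl
lemma tv_2_4_0 (q : ℝ) : Tlit q 2 4 0 = 0 := rfl
lemma tv_2_4_1 (q : ℝ) : Tlit q 2 4 1 = 0 := rfl
lemma tv_2_4_2 (q : ℝ) : Tlit q 2 4 2 = 0 := rfl
lemma tv_2_4_3 (q : ℝ) : Tlit q 2 4 3 = 0 := rfl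
lemma tv_2_4_4 (q : ℝ) : Tlit q 2 4 4 = 0 := rfl
lemma tv_2_4_5 (q : ℝ) : Tlit q 2 4 5 = 0 := rfl
lemma tv_2_4_6 (q : ℝ) : Tlit q 2 4 6 = 0 := rfl
lemma tv_2_5_0 (q : ℝ) : Tlit q 2 5 0 = 0 := rfl
lemma tv_2_5_1 (q : ℝ) : Tlit q 2 5 1 = 0 := rfl
lemma tv_2_5_2 (q : ℝ) : Tlit q 2 5 2 = 0 := rfl
lemma tv_2_5_3 (q : ℝ) : Tlit q 2 5 3 = 0 := rfl
lemma tv_2_5_4 (q : ℝ) : Tlit q 2 5 4 = 0 := rfl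
lemma tv_2_5_5 (q : ℝ) : Tlit q 2 5 5 = 0 := rfl
lemma tv_2_5_6 (q : ℝ) : Tlit q 2 5 6 = 0 := rfl
lemma tv_2_6_0 (q : ℝ) : Tlit q 2 6 0 = 0 := rfl
lemma tv_2_6_1 (q : ℝ) : Tlit q 2 6 1 = 0 := rfl
lemma tv_2_6_2 (q : ℝ) : Tlit q 2 6 2 = 0 := rfl
lemma tv_2_6_3 (q : ℝ) : Tlit q 2 6 3 = 0 := rfl
lemma tv_2_6_4 (q : ℝ) : Tlit q 2 6 4 = 0 := rfl
lemma tv_2_6_5 (q : ℝ) : Tlit q 2 6 5 = 0 := rfl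
lemma tv_2_6_6 (q : ℝ) : Tlit q 2 6 6 = 0 := rfl
lemma tv_3_0_0 (q : ℝ) : Tlit q 3 0 0 = 0 := rfl
lemma tv_3_0_1 (q : ℝ) : Tlit q 3 0 1 = 0 := rfl
lemma tv_3_0_2 (q : ℝ) : Tlit q 3 0 2 = 0 := rfl
lemma tv_3_0_3 (q : ℝ) : Tlit q 3 0 3 = 1/2 := rfl
lemma tv_3_0_4 (q : ℝ) : Tlit q 3 0 4 = 0 := rfl
lemma tv_3_0_5 (q : ℝ) : Tlit q 3 0 5 = 0 := rfl
lemma tv_3_0_6 (q : ℝ) : Tlit q 3 0 6 = 0 := rfl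
lemma tv_3_1_0 (q : ℝ) : Tlit q 3 1 0 = 0 := rfl
lemma tv_3_1_1 (q : ℝ) : Tlit q 3 1 1 = 0 := rfl
lemma tv_3_1_2 (q : ℝ) : Tlit q 3 1 2 = 0 := rfl
lemma tv_3_1_3 (q : ℝ) : Tlit q 3 1 3 = 0 := rfl
lemma tv_3_1_4 (q : ℝ) : Tlit q 3 1 4 = 1/2 := rfl
lemma tv_3_1_5 (q : ℝ) : Tlit q 3 1 5 = 0 := rfl
lemma tv_3_1_6 (q : ℝ) : Tlit q 3 1 6 = 0 := rfl
lemma tv_3_2_0 (q : ℝ) : Tlit q 3 2 0 = 0 := rfl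
lemma tv_3_2_1 (q : ℝ) : Tlit q 3 2 1 = 0 := rfl
lemma tv_3_2_2 (q : ℝ) : Tlit q 3 2 2 = 0 := rfl
lemma tv_3_2_3 (q : ℝ) : Tlit q 3 2 3 = 0 := rfl
lemma tv_3_2_4 (q : ℝ) : Tlit q 3 2 4 = 1/2 := rfl
lemma tv_3_2_5 (q : ℝ) : Tlit q 3 2 5 = 0 := rfl
lemma tv_3_2_6 (q : ℝ) : Tlit q 3 2 6 = 0 := rfl
lemma tv_3_3_0 (q : ℝ) : Tlit q 3 3 0 = -(1/2) := rfl
lemma tv_3_3_1 (q : ℝ) : Tlit q 3 3 1 = -(0) := rfl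
lemma tv_3_3_2 (q : ℝ) : Tlit q 3 3 2 = -(0) := rfl
lemma tv_3_3_3 (q : ℝ) : Tlit q 3 3 3 = 0 := rfl
lemma tv_3_3_4 (q : ℝ) : Tlit q 3 3 4 = 0 := rfl
lemma tv_3_3_5 (q : ℝ) : Tlit q 3 3 5 = 0 := rfl
lemma tv_3_3_6 (q : ℝ) : Tlit q 3 3 6 = -q := rfl
lemma tv_3_4_0 (q : ℝ) : Tlit q 3 4 0 = -(0) := rfl
lemma tv_3_4_1 (q : ℝ) : Tlit q 3 4 1 = -(1/2) := rfl
lemma tv_3_4_2 (q : ℝ) : Tlit q 3 4 2 = -(1/2) := rfl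
lemma tv_3_4_3 (q : ℝ) : Tlit q 3 4 3 = 0 := rfl
lemma tv_3_4_4 (q : ℝ) : Tlit q 3 4 4 = 0 := rfl
lemma tv_3_4_5 (q : ℝ) : Tlit q 3 4 5 = 0 := rfl
lemma tv_3_4_6 (q : ℝ) : Tlit q 3 4 6 = 0 := rfl
lemma tv_3_5_0 (q : ℝ) : Tlit q 3 5 0 = 0 := rfl
lemma tv_3_5_1 (q : ℝ) : Tlit q 3 5 1 = 0 := rfl
lemma tv_3_5_2 (q : ℝ) : Tlit q 3 5 2 = 0 := rfl
lemma tv_3_5_3 (q : ℝ) : Tlit q 3 5 3 = 0 := rfl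
lemma tv_3_5_4 (q : ℝ) : Tlit q 3 5 4 = 0 := rfl
lemma tv_3_5_5 (q : ℝ) : Tlit q 3 5 5 = 0 := rfl
lemma tv_3_5_6 (q : ℝ) : Tlit q 3 5 6 = 0 := rfl
lemma tv_3_6_0 (q : ℝ) : Tlit q 3 6 0 = 0 := rfl
lemma tv_3_6_1 (q : ℝ) : Tlit q 3 6 1 = 0 := rfl
lemma tv_3_6_2 (q : ℝ) : Tlit q 3 6 2 = 0 := rfl
lemma tv_3_6_3 (q : ℝ) : Tlit q 3 6 3 = q := rfl
lemma tv_3_6_4 (q : ℝ) : Tlit q 3 6 4 = 0 := rfl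
lemma tv_3_6_5 (q : ℝ) : Tlit q 3 6 5 = 0 := rfl
lemma tv_3_6_6 (q : ℝ) : Tlit q 3 6 6 = 0 := rfl
lemma tv_4_0_0 (q : ℝ) : Tlit q 4 0 0 = 0 := rfl
lemma tv_4_0_1 (q : ℝ) : Tlit q 4 0 1 = 0 := rfl
lemma tv_4_0_2 (q : ℝ) : Tlit q 4 0 2 = 0 := rfl
lemma tv_4_0_3 (q : ℝ) : Tlit q 4 0 3 = 0 := rfl
lemma tv_4_0_4 (q : ℝ) : Tlit q 4 0 4 = -1/2 := rfl
lemma tv_4_0_5 (q : ℝ) : Tlit q 4 0 5 = 0 := rfl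
lemma tv_4_0_6 (q : ℝ) : Tlit q 4 0 6 = 0 := rfl
lemma tv_4_1_0 (q : ℝ) : Tlit q 4 1 0 = 0 := rfl
lemma tv_4_1_1 (q : ℝ) : Tlit q 4 1 1 = 0 := rfl
lemma tv_4_1_2 (q : ℝ) : Tlit q 4 1 2 = 0 := rfl
lemma tv_4_1_3 (q : ℝ) : Tlit q 4 1 3 = 1/2 := rfl
lemma tv_4_1_4 (q : ℝ) : Tlit q 4 1 4 = 0 := rfl
lemma tv_4_1_5 (q : ℝ) : Tlit q 4 1 5 = 0 := rfl
lemma tv_4_1_6 (q : ℝ) : Tlit q 4 1 6 = 0 := rfl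
lemma tv_4_2_0 (q : ℝ) : Tlit q 4 2 0 = 0 := rfl
lemma tv_4_2_1 (q : ℝ) : Tlit q 4 2 1 = 0 := rfl
lemma tv_4_2_2 (q : ℝ) : Tlit q 4 2 2 = 0 := rfl
lemma tv_4_2_3 (q : ℝ) : Tlit q 4 2 3 = -1/2 := rfl
lemma tv_4_2_4 (q : ℝ) : Tlit q 4 2 4 = 0 := rfl
lemma tv_4_2_5 (q : ℝ) : Tlit q 4 2 5 = 0 := rfl
lemma tv_4_2_6 (q : ℝ) : Tlit q 4 2 6 = 0 := rfl
lemma tv_4_3_0 (q : ℝ) : Tlit q 4 3 0 = -(0) := rfl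
lemma tv_4_3_1 (q : ℝ) : Tlit q 4 3 1 = -(1/2) := rfl
lemma tv_4_3_2 (q : ℝ) : Tlit q 4 3 2 = -(-1/2) := rfl
lemma tv_4_3_3 (q : ℝ) : Tlit q 4 3 3 = 0 := rfl
lemma tv_4_3_4 (q : ℝ) : Tlit q 4 3 4 = 0 := rfl
lemma tv_4_3_5 (q : ℝ) : Tlit q 4 3 5 = 0 := rfl
lemma tv_4_3_6 (q : ℝ) : Tlit q 4 3 6 = 0 := rfl
lemma tv_4_4_0 (q : ℝ) : Tlit q 4 4 0 = -(-1/2) := rfl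
lemma tv_4_4_1 (q : ℝ) : Tlit q 4 4 1 = -(0) := rfl
lemma tv_4_4_2 (q : ℝ) : Tlit q 4 4 2 = -(0) := rfl
lemma tv_4_4_3 (q : ℝ) : Tlit q 4 4 3 = 0 := rfl
lemma tv_4_4_4 (q : ℝ) : Tlit q 4 4 4 = 0 := rfl
lemma tv_4_4_5 (q : ℝ) : Tlit q 4 4 5 = 0 := rfl
lemma tv_4_4_6 (q : ℝ) : Tlit q 4 4 6 = -q := rfl
lemma tv_4_5_0 (q : ℝ) : Tlit q 4 5 0 = 0 := rfl
lemma tv_4_5_1 (q : ℝ) : Tlit q 4 5 1 = 0 := rfl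
lemma tv_4_5_2 (q : ℝ) : Tlit q 4 5 2 = 0 := rfl
lemma tv_4_5_3 (q : ℝ) : Tlit q 4 5 3 = 0 := rfl
lemma tv_4_5_4 (q : ℝ) : Tlit q 4 5 4 = 0 := rfl
lemma tv_4_5_5 (q : ℝ) : Tlit q 4 5 5 = 0 := rfl
lemma tv_4_5_6 (q : ℝ) : Tlit q 4 5 6 = 0 := rfl
lemma tv_4_6_0 (q : ℝ) : Tlit q 4 6 0 = 0 := rfl
lemma tv_4_6_1 (q : ℝ) : Tlit q 4 6 1 = 0 := rfl
lemma tv_4_6_2 (q : ℝ) : Tlit q 4 6 2 = 0 := rfl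
lemma tv_4_6_3 (q : ℝ) : Tlit q 4 6 3 = 0 := rfl
lemma tv_4_6_4 (q : ℝ) : Tlit q 4 6 4 = q := rfl
lemma tv_4_6_5 (q : ℝ) : Tlit q 4 6 5 = 0 := rfl
lemma tv_4_6_6 (q : ℝ) : Tlit q 4 6 6 = 0 := rfl
lemma tv_5_0_0 (q : ℝ) : Tlit q 5 0 0 = 0 := rfl
lemma tv_5_0_1 (q : ℝ) : Tlit q 5 0 1 = 0 := rfl
lemma tv_5_0_2 (q : ℝ) : Tlit q 5 0 2 = 0 := rfl
lemma tv_5_0_3 (q : ℝ) : Tlit q 5 0 3 = 0 := rfl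
lemma tv_5_0_4 (q : ℝ) : Tlit q 5 0 4 = 0 := rfl
lemma tv_5_0_5 (q : ℝ) : Tlit q 5 0 5 = 0 := rfl
lemma tv_5_0_6 (q : ℝ) : Tlit q 5 0 6 = 0 := rfl
lemma tv_5_1_0 (q : ℝ) : Tlit q 5 1 0 = 0 := rfl
lemma tv_5_1_1 (q : ℝ) : Tlit q 5 1 1 = 0 := rfl
lemma tv_5_1_2 (q : ℝ) : Tlit q 5 1 2 = 0 := rfl
lemma tv_5_1_3 (q : ℝ) : Tlit q 5 1 3 = 0 := rfl
lemma tv_5_1_4 (q : ℝ) : Tlit q 5 1 4 = 0 := rfl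
lemma tv_5_1_5 (q : ℝ) : Tlit q 5 1 5 = 0 := rfl
lemma tv_5_1_6 (q : ℝ) : Tlit q 5 1 6 = 0 := rfl
lemma tv_5_2_0 (q : ℝ) : Tlit q 5 2 0 = 0 := rfl
lemma tv_5_2_1 (q : ℝ) : Tlit q 5 2 1 = 0 := rfl
lemma tv_5_2_2 (q : ℝ) : Tlit q 5 2 2 = 0 := rfl
lemma tv_5_2_3 (q : ℝ) : Tlit q 5 2 3 = 0 := rfl
lemma tv_5_2_4 (q : ℝ) : Tlit q 5 2 4 = 0 := rfl
lemma tv_5_2_5 (q : ℝ) : Tlit q 5 2 5 = 0 := rfl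
lemma tv_5_2_6 (q : ℝ) : Tlit q 5 2 6 = 0 := rfl
lemma tv_5_3_0 (q : ℝ) : Tlit q 5 3 0 = 0 := rfl
lemma tv_5_3_1 (q : ℝ) : Tlit q 5 3 1 = 0 := rfl
lemma tv_5_3_2 (q : ℝ) : Tlit q 5 3 2 = 0 := rfl
lemma tv_5_3_3 (q : ℝ) : Tlit q 5 3 3 = 0 := rfl
lemma tv_5_3_4 (q : ℝ) : Tlit q 5 3 4 = 1 := rfl
lemma tv_5_3_5 (q : ℝ) : Tlit q 5 3 5 = 0 := rfl
lemma tv_5_3_6 (q : ℝ) : Tlit q 5 3 6 = 0 := rfl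
lemma tv_5_4_0 (q : ℝ) : Tlit q 5 4 0 = 0 := rfl
lemma tv_5_4_1 (q : ℝ) : Tlit q 5 4 1 = 0 := rfl
lemma tv_5_4_2 (q : ℝ) : Tlit q 5 4 2 = 0 := rfl
lemma tv_5_4_3 (q : ℝ) : Tlit q 5 4 3 = -1 := rfl
lemma tv_5_4_4 (q : ℝ) : Tlit q 5 4 4 = 0 := rfl
lemma tv_5_4_5 (q : ℝ) : Tlit q 5 4 5 = 0 := rfl
lemma tv_5_4_6 (q : ℝ) : Tlit q 5 4 6 = 0 := rfl
lemma tv_5_5_0 (q : ℝ) : Tlit q 5 5 0 = 0 := rfl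
lemma tv_5_5_1 (q : ℝ) : Tlit q 5 5 1 = 0 := rfl
lemma tv_5_5_2 (q : ℝ) : Tlit q 5 5 2 = 0 := rfl
lemma tv_5_5_3 (q : ℝ) : Tlit q 5 5 3 = 0 := rfl
lemma tv_5_5_4 (q : ℝ) : Tlit q 5 5 4 = 0 := rfl
lemma tv_5_5_5 (q : ℝ) : Tlit q 5 5 5 = 0 := rfl
lemma tv_5_5_6 (q : ℝ) : Tlit q 5 5 6 = -(2*q) := rfl
lemma tv_5_6_0 (q : ℝ) : Tlit q 5 6 0 = 0 := rfl
lemma tv_5_6_1 (q : ℝ) : Tlit q 5 6 1 = 0 := rfl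
lemma tv_5_6_2 (q : ℝ) : Tlit q 5 6 2 = 0 := rfl
lemma tv_5_6_3 (q : ℝ) : Tlit q 5 6 3 = 0 := rfl
lemma tv_5_6_4 (q : ℝ) : Tlit q 5 6 4 = 0 := rfl
lemma tv_5_6_5 (q : ℝ) : Tlit q 5 6 5 = 2*q := rfl
lemma tv_5_6_6 (q : ℝ) : Tlit q 5 6 6 = 0 := rfl
lemma tv_6_0_0 (q : ℝ) : Tlit q 6 0 0 = 0 := rfl
lemma tv_6_0_1 (q : ℝ) : Tlit q 6 0 1 = 0 := rfl
lemma tv_6_0_2 (q : ℝ) : Tlit q 6 0 2 = 0 := rfl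
lemma tv_6_0_3 (q : ℝ) : Tlit q 6 0 3 = 0 := rfl
lemma tv_6_0_4 (q : ℝ) : Tlit q 6 0 4 = 0 := rfl
lemma tv_6_0_5 (q : ℝ) : Tlit q 6 0 5 = 0 := rfl
lemma tv_6_0_6 (q : ℝ) : Tlit q 6 0 6 = 0 := rfl
lemma tv_6_1_0 (q : ℝ) : Tlit q 6 1 0 = 0 := rfl
lemma tv_6_1_1 (q : ℝ) : Tlit q 6 1 1 = 0 := rfl
lemma tv_6_1_2 (q : ℝ) : Tlit q 6 1 2 = 0 := rfl
lemma tv_6_1_3 (q : ℝ) : Tlit q 6 1 3 = 0 := rfl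
lemma tv_6_1_4 (q : ℝ) : Tlit q 6 1 4 = 0 := rfl
lemma tv_6_1_5 (q : ℝ) : Tlit q 6 1 5 = 0 := rfl
lemma tv_6_1_6 (q : ℝ) : Tlit q 6 1 6 = 0 := rfl
lemma tv_6_2_0 (q : ℝ) : Tlit q 6 2 0 = 0 := rfl
lemma tv_6_2_1 (q : ℝ) : Tlit q 6 2 1 = 0 := rfl
lemma tv_6_2_2 (q : ℝ) : Tlit q 6 2 2 = 0 := rfl
lemma tv_6_2_3 (q : ℝ) : Tlit q 6 2 3 = 0 := rfl
lemma tv_6_2_4 (q : ℝ) : Tlit q 6 2 4 = 0 := rfl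
lemma tv_6_2_5 (q : ℝ) : Tlit q 6 2 5 = 0 := rfl
lemma tv_6_2_6 (q : ℝ) : Tlit q 6 2 6 = 0 := rfl
lemma tv_6_3_0 (q : ℝ) : Tlit q 6 3 0 = 0 := rfl
lemma tv_6_3_1 (q : ℝ) : Tlit q 6 3 1 = 0 := rfl
lemma tv_6_3_2 (q : ℝ) : Tlit q 6 3 2 = 0 := rfl
lemma tv_6_3_3 (q : ℝ) : Tlit q 6 3 3 = 0 := rfl
lemma tv_6_3_4 (q : ℝ) : Tlit q 6 3 4 = 0 := rfl
lemma tv_6_3_5 (q : ℝ) : Tlit q 6 3 5 = 0 := rfl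
lemma tv_6_3_6 (q : ℝ) : Tlit q 6 3 6 = 0 := rfl
lemma tv_6_4_0 (q : ℝ) : Tlit q 6 4 0 = 0 := rfl
lemma tv_6_4_1 (q : ℝ) : Tlit q 6 4 1 = 0 := rfl
lemma tv_6_4_2 (q : ℝ) : Tlit q 6 4 2 = 0 := rfl
lemma tv_6_4_3 (q : ℝ) : Tlit q 6 4 3 = 0 := rfl
lemma tv_6_4_4 (q : ℝ) : Tlit q 6 4 4 = 0 := rfl
lemma tv_6_4_5 (q : ℝ) : Tlit q 6 4 5 = 0 := rfl
lemma tv_6_4_6 (q : ℝ) : Tlit q 6 4 6 = 0 := rfl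
lemma tv_6_5_0 (q : ℝ) : Tlit q 6 5 0 = 0 := rfl
lemma tv_6_5_1 (q : ℝ) : Tlit q 6 5 1 = 0 := rfl
lemma tv_6_5_2 (q : ℝ) : Tlit q 6 5 2 = 0 := rfl
lemma tv_6_5_3 (q : ℝ) : Tlit q 6 5 3 = 0 := rfl
lemma tv_6_5_4 (q : ℝ) : Tlit q 6 5 4 = 0 := rfl
lemma tv_6_5_5 (q : ℝ) : Tlit q 6 5 5 = 0 := rfl
lemma tv_6_5_6 (q : ℝ) : Tlit q 6 5 6 = 0 := rfl
lemma tv_6_6_0 (q : ℝ) : Tlit q 6 6 0 = 0 := rfl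
lemma tv_6_6_1 (q : ℝ) : Tlit q 6 6 1 = 0 := rfl
lemma tv_6_6_2 (q : ℝ) : Tlit q 6 6 2 = 0 := rfl
lemma tv_6_6_3 (q : ℝ) : Tlit q 6 6 3 = 0 := rfl
lemma tv_6_6_4 (q : ℝ) : Tlit q 6 6 4 = 0 := rfl
lemma tv_6_6_5 (q : ℝ) : Tlit q 6 6 5 = 0 := rfl
lemma tv_6_6_6 (q : ℝ) : Tlit q 6 6 6 = 0 := rfl


theorem tau_eq (f : Fin 3 → Fin 3 → Fin 3 → ℝ) (q : ℝ)
    (hfv : ∀ x y z, f x y z = Flit x y z) :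
    tauSO12W2UZ f q = Tlit q := by
  funext A I B
  fin_cases A <;> fin_cases I <;> fin_cases B <;>
    first
      | rfl
      | exact hfv _ _ _

lemma TlitAnti (q : ℝ) : ∀ A I B, Tlit q A I B = -Tlit q A B I := by
  intro A I B
  fin_cases A <;> fin_cases I <;> fin_cases B <;>
  · simp only [Fin.mk_zero, Fin.mk_one, mk7_2, mk7_3, mk7_4, mk7_5, mk7_6, Fin.isValue,
      tv_0_0_0, tv_0_0_1, tv_0_0_2, tv_0_0_3, tv_0_0_4, tv_0_0_5, tv_0_0_6, tv_0_1_0, tv_0_1_1, tv_0_1_2, tv_0_1_3, tv_0_1_4, tv_0_1_5, tv_0_1_6, tv_0_2_0, tv_0_2_1, tv_0_2_2, tv_0_2_3, tv_0_2_4, tv_0_2_5, tv_0_2_6, tv_0_3_0, tv_0_3_1, tv_0_3_2, tv_0_3_3, tv_0_3_4, tv_0_3_5, tv_0_3_6, tv_0_4_0, tv_0_4_1, tv_0_4_2, tv_0_4_3, tv_0_4_4, tv_0_4_5, tv_0_4_6, tv_0_5_0, tv_0_5_1, tv_0_5_2, tv_0_5_3, tv_0_5_4, tv_0_5_5, tv_0_5_6,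 tv_0_6_0, tv_0_6_1, tv_0_6_2, tv_0_6_3, tv_0_6_4, tv_0_6_5, tv_0_6_6, tv_1_0_0, tv_1_0_1, tv_1_0_2, tv_1_0_3, tv_1_0_4, tv_1_0_5, tv_1_0_6, tv_1_1_0, tv_1_1_1, tv_1_1_2, tv_1_1_3, tv_1_1_4, tv_1_1_5, tv_1_1_6, tv_1_2_0, tv_1_2_1, tv_1_2_2, tv_1_2_3, tv_1_2_4, tv_1_2_5, tv_1_2_6, tv_1_3_0, tv_1_3_1, tv_1_3_2, tv_1_3_3, tv_1_3_4, tv_1_3_5, tv_1_3_6, tv_1_4_0, tv_1_4_1, tv_1_4_2, tv_1_4_3, tv_1_4_4, tv_1_4_5, tv_1_4_6, tv_1_5_0, tv_1_5_1, tv_1_5_2, tv_1_5_3, tv_1_5_4, tv_1_5_5, tv_1_5_6, tv_1_6_0, tv_1_6_1, tv_1_6_2, tv_1_6_3, tv_1_6_4, tv_1_6_5, tv_1_6_6, tv_2_0_0, tv_2_0_1, tv_2_0_2, tv_2_0_3, tv_2_0_4, tv_2_0_5, tv_2_0_6, tv_2_1_0, tv_2_1_1, tv_2_1_2, tv_2_1_3,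 tv_2_1_4, tv_2_1_5, tv_2_1_6, tv_2_2_0, tv_2_2_1, tv_2_2_2, tv_2_2_3, tv_2_2_4, tv_2_2_5, tv_2_2_6, tv_2_3_0, tv_2_3_1, tv_2_3_2, tv_2_3_3, tv_2_3_4, tv_2_3_5, tv_2_3_6, tv_2_4_0, tv_2_4_1, tv_2_4_2, tv_2_4_3, tv_2_4_4, tv_2_4_5, tv_2_4_6, tv_2_5_0, tv_2_5_1, tv_2_5_2, tv_2_5_3, tv_2_5_4, tv_2_5_5, tv_2_5_6, tv_2_6_0, tv_2_6_1, tv_2_6_2, tv_2_6_3, tv_2_6_4, tv_2_6_5, tv_2_6_6, tv_3_0_0, tv_3_0_1, tv_3_0_2, tv_3_0_3, tv_3_0_4, tv_3_0_5, tv_3_0_6, tv_3_1_0, tv_3_1_1, tv_3_1_2, tv_3_1_3, tv_3_1_4, tv_3_1_5, tv_3_1_6, tv_3_2_0, tv_3_2_1, tv_3_2_2, tv_3_2_3, tv_3_2_4, tv_3_2_5, tv_3_2_6, tv_3_3_0, tv_3_3_1, tv_3_3_2, tv_3_3_3, tv_3_3_4, tv_3_3_5, tv_3_3_6, tv_3_4_0,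 tv_3_4_1, tv_3_4_2, tv_3_4_3, tv_3_4_4, tv_3_4_5, tv_3_4_6, tv_3_5_0, tv_3_5_1, tv_3_5_2, tv_3_5_3, tv_3_5_4, tv_3_5_5, tv_3_5_6, tv_3_6_0, tv_3_6_1, tv_3_6_2, tv_3_6_3, tv_3_6_4, tv_3_6_5, tv_3_6_6, tv_4_0_0, tv_4_0_1, tv_4_0_2, tv_4_0_3, tv_4_0_4, tv_4_0_5, tv_4_0_6, tv_4_1_0, tv_4_1_1, tv_4_1_2, tv_4_1_3, tv_4_1_4, tv_4_1_5, tv_4_1_6, tv_4_2_0, tv_4_2_1, tv_4_2_2, tv_4_2_3, tv_4_2_4, tv_4_2_5, tv_4_2_6, tv_4_3_0, tv_4_3_1, tv_4_3_2, tv_4_3_3, tv_4_3_4, tv_4_3_5, tv_4_3_6, tv_4_4_0, tv_4_4_1, tv_4_4_2, tv_4_4_3, tv_4_4_4, tv_4_4_5, tv_4_4_6, tv_4_5_0, tv_4_5_1, tv_4_5_2, tv_4_5_3, tv_4_5_4, tv_4_5_5, tv_4_5_6, tv_4_6_0, tv_4_6_1, tv_4_6_2, tv_4_6_3, tv_4_6_4,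 tv_4_6_5, tv_4_6_6, tv_5_0_0, tv_5_0_1, tv_5_0_2, tv_5_0_3, tv_5_0_4, tv_5_0_5, tv_5_0_6, tv_5_1_0, tv_5_1_1, tv_5_1_2, tv_5_1_3, tv_5_1_4, tv_5_1_5, tv_5_1_6, tv_5_2_0, tv_5_2_1, tv_5_2_2, tv_5_2_3, tv_5_2_4, tv_5_2_5, tv_5_2_6, tv_5_3_0, tv_5_3_1, tv_5_3_2, tv_5_3_3, tv_5_3_4, tv_5_3_5, tv_5_3_6, tv_5_4_0, tv_5_4_1, tv_5_4_2, tv_5_4_3, tv_5_4_4, tv_5_4_5, tv_5_4_6, tv_5_5_0, tv_5_5_1, tv_5_5_2, tv_5_5_3, tv_5_5_4, tv_5_5_5, tv_5_5_6, tv_5_6_0, tv_5_6_1, tv_5_6_2, tv_5_6_3, tv_5_6_4, tv_5_6_5, tv_5_6_6, tv_6_0_0, tv_6_0_1, tv_6_0_2, tv_6_0_3, tv_6_0_4, tv_6_0_5, tv_6_0_6, tv_6_1_0, tv_6_1_1, tv_6_1_2, tv_6_1_3, tv_6_1_4, tv_6_1_5, tv_6_1_6, tv_6_2_0, tv_6_2_1,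 tv_6_2_2, tv_6_2_3, tv_6_2_4, tv_6_2_5, tv_6_2_6, tv_6_3_0, tv_6_3_1, tv_6_3_2, tv_6_3_3, tv_6_3_4, tv_6_3_5, tv_6_3_6, tv_6_4_0, tv_6_4_1, tv_6_4_2, tv_6_4_3, tv_6_4_4, tv_6_4_5, tv_6_4_6, tv_6_5_0, tv_6_5_1, tv_6_5_2, tv_6_5_3, tv_6_5_4, tv_6_5_5, tv_6_5_6, tv_6_6_0, tv_6_6_1, tv_6_6_2, tv_6_6_3, tv_6_6_4, tv_6_6_5, tv_6_6_6]
    all_goals try ring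
    all_goals try norm_num

/-- The Jacobi cyclic sum for `Tlit`. -/
noncomputable def Ssum (q : ℝ) (I J K M : Fin 7) : ℝ :=
  ∑ L, (Tlit q M L K * Tlit q L I J + Tlit q M L I * Tlit q L J K + Tlit q M L J * Tlit q L K I)

lemma Scyc (q : ℝ) (I J K M : Fin 7) : Ssum q I J K M = Ssum q J K I M :=
  Finset.sum_congr rfl fun L _ => by ring

lemma Ssw (q : ℝ) (I J K M : Fin 7) : Ssum q J I K M = -Ssum q I J K M := by
  unfold Ssum
  rw [← Finset.sum_neg_distrib]
  refine Finset.sum_congr rfl fun L _ => ?_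
  rw [TlitAnti q L J I, TlitAnti q L K J, TlitAnti q L K I]
  ring

lemma Szero (q : ℝ) (I K M : Fin 7) : Ssum q I I K M = 0 :=
  Finset.sum_eq_zero fun L _ => by
    have h1 : Tlit q L I I = 0 := by have := TlitAnti q L I I; linarith
    rw [h1, TlitAnti q L K I]; ring

set_option maxHeartbeats 4000000 in
lemma Sbase (q : ℝ) : ∀ I J K M : Fin 7, I < J → J < K → Ssum q I J K M = 0 := by
  intro I J K M h1 h2
  fin_cases I <;> fin_cases J <;> fin_cases K <;>
    first
    | exact absurd h1 (by decide)
    | exact absurd h2 (by decide)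
    | (fin_cases M <;>
       · simp only [Ssum, Fin.mk_zero, Fin.mk_one, mk7_2, mk7_3, mk7_4, mk7_5, mk7_6, Fin.isValue,
      Fin.sum_univ_seven, mul_zero, zero_mul, add_zero, zero_add, neg_zero, mul_neg, neg_neg,
           tv_0_0_0, tv_0_0_1, tv_0_0_2, tv_0_0_3, tv_0_0_4, tv_0_0_5, tv_0_0_6, tv_0_1_0, tv_0_1_1, tv_0_1_2, tv_0_1_3, tv_0_1_4, tv_0_1_5, tv_0_1_6, tv_0_2_0, tv_0_2_1, tv_0_2_2, tv_0_2_3, tv_0_2_4, tv_0_2_5, tv_0_2_6, tv_0_3_0, tv_0_3_1, tv_0_3_2, tv_0_3_3, tv_0_3_4, tv_0_3_5, tv_0_3_6, tv_0_4_0, tv_0_4_1, tv_0_4_2, tv_0_4_3, tv_0_4_4, tv_0_4_5, tv_0_4_6, tv_0_5_0, tv_0_5_1, tv_0_5_2, tv_0_5_3, tv_0_5_4, tv_0_5_5, tv_0_5_6, tv_0_6_0, tv_0_6_1, tv_0_6_2, tv_0_6_3, tv_0_6_4, tv_0_6_5, tv_0_6_6, tv_1_0_0, tv_1_0_1, tv_1_0_2,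 tv_1_0_3, tv_1_0_4, tv_1_0_5, tv_1_0_6, tv_1_1_0, tv_1_1_1, tv_1_1_2, tv_1_1_3, tv_1_1_4, tv_1_1_5, tv_1_1_6, tv_1_2_0, tv_1_2_1, tv_1_2_2, tv_1_2_3, tv_1_2_4, tv_1_2_5, tv_1_2_6, tv_1_3_0, tv_1_3_1, tv_1_3_2, tv_1_3_3, tv_1_3_4, tv_1_3_5, tv_1_3_6, tv_1_4_0, tv_1_4_1, tv_1_4_2, tv_1_4_3, tv_1_4_4, tv_1_4_5, tv_1_4_6, tv_1_5_0, tv_1_5_1, tv_1_5_2, tv_1_5_3, tv_1_5_4, tv_1_5_5, tv_1_5_6, tv_1_6_0, tv_1_6_1, tv_1_6_2, tv_1_6_3, tv_1_6_4, tv_1_6_5, tv_1_6_6, tv_2_0_0, tv_2_0_1, tv_2_0_2, tv_2_0_3, tv_2_0_4, tv_2_0_5, tv_2_0_6, tv_2_1_0, tv_2_1_1, tv_2_1_2, tv_2_1_3, tv_2_1_4, tv_2_1_5, tv_2_1_6, tv_2_2_0, tv_2_2_1, tv_2_2_2, tv_2_2_3, tv_2_2_4, tv_2_2_5, tv_2_2_6,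 tv_2_3_0, tv_2_3_1, tv_2_3_2, tv_2_3_3, tv_2_3_4, tv_2_3_5, tv_2_3_6, tv_2_4_0, tv_2_4_1, tv_2_4_2, tv_2_4_3, tv_2_4_4, tv_2_4_5, tv_2_4_6, tv_2_5_0, tv_2_5_1, tv_2_5_2, tv_2_5_3, tv_2_5_4, tv_2_5_5, tv_2_5_6, tv_2_6_0, tv_2_6_1, tv_2_6_2, tv_2_6_3, tv_2_6_4, tv_2_6_5, tv_2_6_6, tv_3_0_0, tv_3_0_1, tv_3_0_2, tv_3_0_3, tv_3_0_4, tv_3_0_5, tv_3_0_6, tv_3_1_0, tv_3_1_1, tv_3_1_2, tv_3_1_3, tv_3_1_4, tv_3_1_5, tv_3_1_6, tv_3_2_0, tv_3_2_1, tv_3_2_2, tv_3_2_3, tv_3_2_4, tv_3_2_5, tv_3_2_6, tv_3_3_0, tv_3_3_1, tv_3_3_2, tv_3_3_3, tv_3_3_4, tv_3_3_5, tv_3_3_6, tv_3_4_0, tv_3_4_1, tv_3_4_2, tv_3_4_3, tv_3_4_4, tv_3_4_5, tv_3_4_6, tv_3_5_0, tv_3_5_1, tv_3_5_2, tv_3_5_3,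 tv_3_5_4, tv_3_5_5, tv_3_5_6, tv_3_6_0, tv_3_6_1, tv_3_6_2, tv_3_6_3, tv_3_6_4, tv_3_6_5, tv_3_6_6, tv_4_0_0, tv_4_0_1, tv_4_0_2, tv_4_0_3, tv_4_0_4, tv_4_0_5, tv_4_0_6, tv_4_1_0, tv_4_1_1, tv_4_1_2, tv_4_1_3, tv_4_1_4, tv_4_1_5, tv_4_1_6, tv_4_2_0, tv_4_2_1, tv_4_2_2, tv_4_2_3, tv_4_2_4, tv_4_2_5, tv_4_2_6, tv_4_3_0, tv_4_3_1, tv_4_3_2, tv_4_3_3, tv_4_3_4, tv_4_3_5, tv_4_3_6, tv_4_4_0, tv_4_4_1, tv_4_4_2, tv_4_4_3, tv_4_4_4, tv_4_4_5, tv_4_4_6, tv_4_5_0, tv_4_5_1, tv_4_5_2, tv_4_5_3, tv_4_5_4, tv_4_5_5, tv_4_5_6, tv_4_6_0, tv_4_6_1, tv_4_6_2, tv_4_6_3, tv_4_6_4, tv_4_6_5, tv_4_6_6, tv_5_0_0, tv_5_0_1, tv_5_0_2, tv_5_0_3, tv_5_0_4, tv_5_0_5, tv_5_0_6, tv_5_1_0,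 tv_5_1_1, tv_5_1_2, tv_5_1_3, tv_5_1_4, tv_5_1_5, tv_5_1_6, tv_5_2_0, tv_5_2_1, tv_5_2_2, tv_5_2_3, tv_5_2_4, tv_5_2_5, tv_5_2_6, tv_5_3_0, tv_5_3_1, tv_5_3_2, tv_5_3_3, tv_5_3_4, tv_5_3_5, tv_5_3_6, tv_5_4_0, tv_5_4_1, tv_5_4_2, tv_5_4_3, tv_5_4_4, tv_5_4_5, tv_5_4_6, tv_5_5_0, tv_5_5_1, tv_5_5_2, tv_5_5_3, tv_5_5_4, tv_5_5_5, tv_5_5_6, tv_5_6_0, tv_5_6_1, tv_5_6_2, tv_5_6_3, tv_5_6_4, tv_5_6_5, tv_5_6_6, tv_6_0_0, tv_6_0_1, tv_6_0_2, tv_6_0_3, tv_6_0_4, tv_6_0_5, tv_6_0_6, tv_6_1_0, tv_6_1_1, tv_6_1_2, tv_6_1_3, tv_6_1_4, tv_6_1_5, tv_6_1_6, tv_6_2_0, tv_6_2_1, tv_6_2_2, tv_6_2_3, tv_6_2_4, tv_6_2_5, tv_6_2_6, tv_6_3_0, tv_6_3_1, tv_6_3_2, tv_6_3_3, tv_6_3_4,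 tv_6_3_5, tv_6_3_6, tv_6_4_0, tv_6_4_1, tv_6_4_2, tv_6_4_3, tv_6_4_4, tv_6_4_5, tv_6_4_6, tv_6_5_0, tv_6_5_1, tv_6_5_2, tv_6_5_3, tv_6_5_4, tv_6_5_5, tv_6_5_6, tv_6_6_0, tv_6_6_1, tv_6_6_2, tv_6_6_3, tv_6_6_4, tv_6_6_5, tv_6_6_6]
         all_goals try norm_num
         all_goals try ring)

lemma Sall (q : ℝ) : ∀ I J K M : Fin 7, Ssum q I J K M = 0 := by
  have h := Sbase q
  intro I J K M
  rcases lt_trichotomy I J with h1 | h1 | h1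
  · rcases lt_trichotomy J K with h2 | h2 | h2
    · exact h I J K M h1 h2
    · subst h2; rw [Scyc]; exact Szero q _ _ _
    · rcases lt_trichotomy I K with h3 | h3 | h3
      · have e : Ssum q I K J M = -Ssum q I J K M :=
          (Scyc q I K J M).trans ((Scyc q K J I M).trans (Ssw q I J K M))
        have h0 := h I K J M h3 h2
        linarith
      · subst h3; rw [Scyc q, Scyc q]; exact Szero q _ _ _
      · rw [Scyc q, Scyc q]; exact h K I J M h3 h1
  · subst h1; exact Szero q _ _ _
  · rcases lt_trichotomy I K with h2 | h2 | h2
    · have h0 := h J I K M h1 h2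
      have e := Ssw q I J K M
      linarith
    · subst h2; rw [Scyc q, Scyc q]; exact Szero q _ _ _
    · rcases lt_trichotomy J K with h3 | h3 | h3
      · rw [Scyc q]; exact h J K I M h3 h2
      · subst h3; rw [Scyc q]; exact Szero q _ _ _
      · have e : Ssum q K J I M = -Ssum q I J K M :=
          (Scyc q K J I M).trans (Ssw q I J K M)
        have h0 := h K J I M h3 h1
        linarith

lemma jacobiTlit (q : ℝ) : JacobiId (Tlit q) :=
  fun I J K M => Sall q I J K M

set_option maxHeartbeats 4000000 in
lemma ricciTlit (q : ℝ) : RicciMatrix (Tlit q) =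
    Matrix.diagonal ![-1, -1, 1/4, -1/4 - 2*q^2, -1/4 - 2*q^2, 1/4 - 4*q^2, -3*q^2] := by
  ext I J
  fin_cases I <;> fin_cases J <;>
  · simp only [RicciMatrix, Matrix.diagonal, Matrix.of_apply, Matrix.trace,
      Matrix.diag_apply, Matrix.mul_apply, Matrix.transpose_apply, Fin.mk_zero, Fin.mk_one, mk7_2, mk7_3, mk7_4, mk7_5, mk7_6, Fin.isValue,
      Fin.sum_univ_seven, mul_zero, zero_mul, add_zero, zero_add, neg_zero, mul_neg, neg_neg,
      cv7_0, cv7_1, cv7_2, cv7_3, cv7_4, cv7_5, cv7_6, tv_0_0_0, tv_0_0_1, tv_0_0_2, tv_0_0_3, tv_0_0_4, tv_0_0_5, tv_0_0_6, tv_0_1_0, tv_0_1_1, tv_0_1_2, tv_0_1_3, tv_0_1_4, tv_0_1_5, tv_0_1_6, tv_0_2_0, tv_0_2_1, tv_0_2_2, tv_0_2_3, tv_0_2_4, tv_0_2_5, tv_0_2_6, tv_0_3_0, tv_0_3_1, tv_0_3_2, tv_0_3_3, tv_0_3_4, tv_0_3_5, tv_0_3_6, tv_0_4_0, tv_0_4_1,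 tv_0_4_2, tv_0_4_3, tv_0_4_4, tv_0_4_5, tv_0_4_6, tv_0_5_0, tv_0_5_1, tv_0_5_2, tv_0_5_3, tv_0_5_4, tv_0_5_5, tv_0_5_6, tv_0_6_0, tv_0_6_1, tv_0_6_2, tv_0_6_3, tv_0_6_4, tv_0_6_5, tv_0_6_6, tv_1_0_0, tv_1_0_1, tv_1_0_2, tv_1_0_3, tv_1_0_4, tv_1_0_5, tv_1_0_6, tv_1_1_0, tv_1_1_1, tv_1_1_2, tv_1_1_3, tv_1_1_4, tv_1_1_5, tv_1_1_6, tv_1_2_0, tv_1_2_1, tv_1_2_2, tv_1_2_3, tv_1_2_4, tv_1_2_5, tv_1_2_6, tv_1_3_0, tv_1_3_1, tv_1_3_2, tv_1_3_3, tv_1_3_4, tv_1_3_5, tv_1_3_6, tv_1_4_0, tv_1_4_1, tv_1_4_2, tv_1_4_3, tv_1_4_4, tv_1_4_5, tv_1_4_6, tv_1_5_0, tv_1_5_1, tv_1_5_2, tv_1_5_3, tv_1_5_4, tv_1_5_5, tv_1_5_6, tv_1_6_0, tv_1_6_1, tv_1_6_2, tv_1_6_3, tv_1_6_4, tv_1_6_5,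 tv_1_6_6, tv_2_0_0, tv_2_0_1, tv_2_0_2, tv_2_0_3, tv_2_0_4, tv_2_0_5, tv_2_0_6, tv_2_1_0, tv_2_1_1, tv_2_1_2, tv_2_1_3, tv_2_1_4, tv_2_1_5, tv_2_1_6, tv_2_2_0, tv_2_2_1, tv_2_2_2, tv_2_2_3, tv_2_2_4, tv_2_2_5, tv_2_2_6, tv_2_3_0, tv_2_3_1, tv_2_3_2, tv_2_3_3, tv_2_3_4, tv_2_3_5, tv_2_3_6, tv_2_4_0, tv_2_4_1, tv_2_4_2, tv_2_4_3, tv_2_4_4, tv_2_4_5, tv_2_4_6, tv_2_5_0, tv_2_5_1, tv_2_5_2, tv_2_5_3, tv_2_5_4, tv_2_5_5, tv_2_5_6, tv_2_6_0, tv_2_6_1, tv_2_6_2, tv_2_6_3, tv_2_6_4, tv_2_6_5, tv_2_6_6, tv_3_0_0, tv_3_0_1, tv_3_0_2, tv_3_0_3, tv_3_0_4, tv_3_0_5, tv_3_0_6, tv_3_1_0, tv_3_1_1, tv_3_1_2, tv_3_1_3, tv_3_1_4, tv_3_1_5, tv_3_1_6, tv_3_2_0, tv_3_2_1, tv_3_2_2,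 tv_3_2_3, tv_3_2_4, tv_3_2_5, tv_3_2_6, tv_3_3_0, tv_3_3_1, tv_3_3_2, tv_3_3_3, tv_3_3_4, tv_3_3_5, tv_3_3_6, tv_3_4_0, tv_3_4_1, tv_3_4_2, tv_3_4_3, tv_3_4_4, tv_3_4_5, tv_3_4_6, tv_3_5_0, tv_3_5_1, tv_3_5_2, tv_3_5_3, tv_3_5_4, tv_3_5_5, tv_3_5_6, tv_3_6_0, tv_3_6_1, tv_3_6_2, tv_3_6_3, tv_3_6_4, tv_3_6_5, tv_3_6_6, tv_4_0_0, tv_4_0_1, tv_4_0_2, tv_4_0_3, tv_4_0_4, tv_4_0_5, tv_4_0_6, tv_4_1_0, tv_4_1_1, tv_4_1_2, tv_4_1_3, tv_4_1_4, tv_4_1_5, tv_4_1_6, tv_4_2_0, tv_4_2_1, tv_4_2_2, tv_4_2_3, tv_4_2_4, tv_4_2_5, tv_4_2_6, tv_4_3_0, tv_4_3_1, tv_4_3_2, tv_4_3_3, tv_4_3_4, tv_4_3_5, tv_4_3_6, tv_4_4_0, tv_4_4_1, tv_4_4_2, tv_4_4_3, tv_4_4_4, tv_4_4_5, tv_4_4_6,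 tv_4_5_0, tv_4_5_1, tv_4_5_2, tv_4_5_3, tv_4_5_4, tv_4_5_5, tv_4_5_6, tv_4_6_0, tv_4_6_1, tv_4_6_2, tv_4_6_3, tv_4_6_4, tv_4_6_5, tv_4_6_6, tv_5_0_0, tv_5_0_1, tv_5_0_2, tv_5_0_3, tv_5_0_4, tv_5_0_5, tv_5_0_6, tv_5_1_0, tv_5_1_1, tv_5_1_2, tv_5_1_3, tv_5_1_4, tv_5_1_5, tv_5_1_6, tv_5_2_0, tv_5_2_1, tv_5_2_2, tv_5_2_3, tv_5_2_4, tv_5_2_5, tv_5_2_6, tv_5_3_0, tv_5_3_1, tv_5_3_2, tv_5_3_3, tv_5_3_4, tv_5_3_5, tv_5_3_6, tv_5_4_0, tv_5_4_1, tv_5_4_2, tv_5_4_3, tv_5_4_4, tv_5_4_5, tv_5_4_6, tv_5_5_0, tv_5_5_1, tv_5_5_2, tv_5_5_3, tv_5_5_4, tv_5_5_5, tv_5_5_6, tv_5_6_0, tv_5_6_1, tv_5_6_2, tv_5_6_3, tv_5_6_4, tv_5_6_5, tv_5_6_6, tv_6_0_0, tv_6_0_1, tv_6_0_2, tv_6_0_3,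 tv_6_0_4, tv_6_0_5, tv_6_0_6, tv_6_1_0, tv_6_1_1, tv_6_1_2, tv_6_1_3, tv_6_1_4, tv_6_1_5, tv_6_1_6, tv_6_2_0, tv_6_2_1, tv_6_2_2, tv_6_2_3, tv_6_2_4, tv_6_2_5, tv_6_2_6, tv_6_3_0, tv_6_3_1, tv_6_3_2, tv_6_3_3, tv_6_3_4, tv_6_3_5, tv_6_3_6, tv_6_4_0, tv_6_4_1, tv_6_4_2, tv_6_4_3, tv_6_4_4, tv_6_4_5, tv_6_4_6, tv_6_5_0, tv_6_5_1, tv_6_5_2, tv_6_5_3, tv_6_5_4, tv_6_5_5, tv_6_5_6, tv_6_6_0, tv_6_6_1, tv_6_6_2, tv_6_6_3, tv_6_6_4, tv_6_6_5, tv_6_6_6]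
    all_goals try norm_num [Fin.ext_iff, v7_0, v7_1, v7_2, v7_3, v7_4, v7_5, v7_6]
    all_goals try ring


/-- The bracket of `so12w2uz` satisfies the Jacobi identity, its Ricci matrix equals
`diag(-1, -1, 1/4, -1/4-2q², -1/4-2q², 1/4-4q², -3q²)`, and the Ricci matrix has
indefinite signature for every real `q`. -/
theorem ricci_so12w2uz (f : Fin 3 → Fin 3 → Fin 3 → ℝ) (q : ℝ)
    (hf : ∀ x y : Fin 3, lam x * lam y - lam y * lam x = ∑ z, f x y z • lam z) :
    JacobiId (tauSO12W2UZ f q) ∧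
    RicciMatrix (tauSO12W2UZ f q) =
      Matrix.diagonal
        ![-1, -1, 1/4, -1/4 - 2*q^2, -1/4 - 2*q^2, 1/4 - 4*q^2, -3*q^2] ∧
    (∃ v w : Fin 7 → ℝ,
      0 < v ⬝ᵥ (RicciMatrix (tauSO12W2UZ f q) *ᵥ v) ∧
      w ⬝ᵥ (RicciMatrix (tauSO12W2UZ f q) *ᵥ w) < 0) := by
  have hfv := fval f hf
  have ht : tauSO12W2UZ f q = Tlit q := tau_eq f q hfv
  refine ⟨?_, ?_, ?_⟩
  · rw [ht]; exact jacobiTlit q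
  · rw [ht]; exact ricciTlit q
  · refine ⟨![0,0,1,0,0,0,0], ![1,0,0,0,0,0,0], ?_, ?_⟩ <;>
    · rw [ht, ricciTlit q]
      simp only [Matrix.mulVec, dotProduct, Matrix.diagonal, Matrix.of_apply,
        Fin.sum_univ_seven, mul_zero, zero_mul, add_zero, zero_add, neg_zero,
        cv7_0, cv7_1, cv7_2, cv7_3, cv7_4, cv7_5, cv7_6]
      norm_num [Fin.ext_iff, v7_0, v7_1, v7_2, v7_3, v7_4, v7_5, v7_6]
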